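/- Let $K$ be a field of characteristic $0$ and let $a_1,\dots,a_n$ be roots of unity in an algebraic closure of $K$ (not necessarily distinct). If $e_k(a_1,\dots,a_n) = 0$ for some $0 \le k \le n$, then $e_{n-k}(a_1,\dots,a_n) = 0$. -/

import Mathlib

/-!
Every `aᵢ` is a power `ζ ^ tᵢ` of a single primitive `n`-th root of unity `ζ`, so `e_k(a)` is the
value at `ζ` of the rational polynomial `e_k(X ^ t₁, …, X ^ tₘ)`. Since `ζ⁻¹` is another root of the
irreducible cyclotomic polynomial `Φₙ = minpoly ℚ ζ`, `e_k(a) = 0` forces `e_k(a⁻¹) = 0`. Reversing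
`∏ (X + aᵢ)` gives `e_{m-k}(a) = (∏ aᵢ) · e_k(a⁻¹)`, which finishes the proof.
-/

open Polynomial

namespace Polynomial

theorem reverse_multiset_prod {R : Type*} [CommSemiring R] [NoZeroDivisors R]
    (s : Multiset R[X]) : s.prod.reverse = (s.map reverse).prod := by
  induction s using Multiset.induction_on with
  | empty => simpa using reverse_C (1 : R)
  | cons p s ih => rw [Multiset.prod_cons, reverse_mul_of_domain, ih, Multiset.map_cons,
      Multiset.prod_cons]

theorem reverse_X_add_C {R : Type*} [Semiring R] [Nontrivial R] (a : R) :
    (X + C a).reverse = 1 + C a * X := by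
  rw [reverse_add_C, natDegree_X, pow_one, ← one_mul X, reverse_mul_X, ← C_1, reverse_C]

end Polynomial

namespace Multiset

theorem esymm_map {R S F : Type*} [CommRing R] [CommRing S] [FunLike F R S] [RingHomClass F R S]
    (f : F) (s : Multiset R) (k : ℕ) : (s.map f).esymm k = f (s.esymm k) := by
  simp [esymm, powersetCard_map, map_multiset_sum, map_multiset_prod]

theorem esymm_map_pow_eq_zero_of_minpoly_eq {A B : Type*} [Field A] [CommRing B] [Algebra A B]
    {x y : B} (hxy : minpoly A x = minpoly A y) (t : Multiset ℕ) {k : ℕ}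
    (h : (t.map (x ^ ·)).esymm k = 0) : (t.map (y ^ ·)).esymm k = 0 := by
  have aeval_esymm (z : B) :
      aeval z ((t.map ((X : A[X]) ^ ·)).esymm k) = (t.map (z ^ ·)).esymm k := by
    rw [← esymm_map, map_map]
    simp
  obtain ⟨g, hg⟩ := minpoly.dvd A x ((aeval_esymm x).trans h)
  rw [← aeval_esymm, hg, map_mul, hxy, minpoly.aeval, zero_mul]

theorem esymm_card_sub_eq_prod_mul_esymm_map_inv {F : Type*} [Field F] (s : Multiset F)
    (hs : ∀ a ∈ s, a ≠ 0) {k : ℕ} (hk : k ≤ card s) :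
    s.esymm (card s - k) = s.prod * (s.map (·⁻¹)).esymm k := by
  set q := ((s.map (·⁻¹)).map fun a => X + C a).prod
  have hq : q.natDegree = card s := by
    rw [natDegree_multiset_prod_of_monic _ fun p hp => by
      obtain ⟨a, -, rfl⟩ := mem_map.mp hp; exact monic_X_add_C a]
    simp
  have hp : (s.map fun a => X + C a).prod = C s.prod * q.reverse := by
    rw [reverse_multiset_prod, map_multiset_prod, map_map, map_map, ← prod_map_mul]
    refine congrArg prod (map_congr rfl fun a ha => ?_)
    simp only [Function.comp_apply, reverse_X_add_C, mul_add, mul_one, ← mul_assoc, ← C_mul,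
      mul_inv_cancel₀ (hs a ha), C_1, one_mul, add_comm]
  calc s.esymm (card s - k) = (s.map fun a => X + C a).prod.coeff k :=
        (prod_X_add_C_coeff s hk).symm
    _ = s.prod * q.coeff (card s - k) := by rw [hp, coeff_C_mul, coeff_reverse, hq, revAt_le hk]
    _ = s.prod * (s.map (·⁻¹)).esymm k := by
        rw [prod_X_add_C_coeff _ (by simp), card_map, Nat.sub_sub_self hk]

end Multiset

theorem IsPrimitiveRoot.minpoly_rat_inv {F : Type*} [Field F] [CharZero F] {ζ : F} {n : ℕ}
    (hζ : IsPrimitiveRoot ζ n) (hn : 0 < n) : minpoly ℚ ζ⁻¹ = minpoly ℚ ζ := by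
  rw [← cyclotomic_eq_minpoly_rat hζ hn, cyclotomic_eq_minpoly_rat hζ.inv hn]

theorem exists_primitiveRoot_map_pow_eq {F : Type*} [Field F] [IsSepClosed F] [CharZero F]
    (s : Multiset F) (hs : ∀ a ∈ s, ∃ m : ℕ, 0 < m ∧ a ^ m = 1) :
    ∃ n > 0, ∃ ζ : F, IsPrimitiveRoot ζ n ∧ ∃ t : Multiset ℕ, t.map (ζ ^ ·) = s := by
  have hfin (a) (ha : a ∈ s) : IsOfFinOrder a := isOfFinOrder_iff_pow_eq_one.mpr (hs a ha)
  set n := (s.map orderOf).prod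
  have hn : 0 < n := Multiset.prod_pos fun m hm => by
    obtain ⟨a, ha, rfl⟩ := Multiset.mem_map.mp hm
    exact (hfin a ha).orderOf_pos
  have : NeZero n := ⟨hn.ne'⟩
  obtain ⟨ζ, hζ⟩ := HasEnoughRootsOfUnity.exists_primitiveRoot F n
  have hpow (a) (ha : a ∈ s) : ∃ i, ζ ^ i = a := by
    obtain ⟨i, -, hi⟩ := hζ.eq_pow_of_pow_eq_one (ξ := a)
      (orderOf_dvd_iff_pow_eq_one.mp (Multiset.dvd_prod (Multiset.mem_map_of_mem _ ha)))
    exact ⟨i, hi⟩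
  choose c hc using hpow
  refine ⟨n, hn, ζ, hζ, s.attach.map fun a => c a.1 a.2, ?_⟩
  rw [Multiset.map_map]
  conv_rhs => rw [← s.attach_map_val]
  exact Multiset.map_congr rfl fun a _ => hc a.1 a.2

theorem stmt2 {K : Type*} [Field K] [CharZero K]
    (s : Multiset (AlgebraicClosure K))
    (hs : ∀ a ∈ s, ∃ m : ℕ, 0 < m ∧ a ^ m = 1)
    (k : ℕ) (hk : k ≤ Multiset.card s) (h : s.esymm k = 0) :
    s.esymm (Multiset.card s - k) = 0 := by
  obtain ⟨n, hn, ζ, hζ, t, rfl⟩ := exists_primitiveRoot_map_pow_eq s hs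
  have hinv : (t.map (ζ ^ ·)).map (·⁻¹) = t.map (ζ⁻¹ ^ ·) := by
    simp only [Multiset.map_map, Function.comp_def, inv_pow]
  have hne : ∀ a ∈ t.map (ζ ^ ·), a ≠ 0 := by
    simp only [Multiset.mem_map]
    rintro _ ⟨i, -, rfl⟩
    exact pow_ne_zero i (hζ.ne_zero hn.ne')
  rw [Multiset.esymm_card_sub_eq_prod_mul_esymm_map_inv _ hne hk, hinv,
    Multiset.esymm_map_pow_eq_zero_of_minpoly_eq (hζ.minpoly_rat_inv hn).symm t h, mul_zero]
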